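/- arXiv:2507.07937 — 4 statements merged into one kernel-verified Lean document; each statement's English description precedes it below -/
import Mathlib

section
/- Let A be a commutative ring containing the rationals, d : A → A a derivation, and I an ideal of A stable under d (i.e. d(I) ⊆ I). If a ∈ A satisfies aⁿ ∈ I for some n ≥ 1, then (d a)^(2n-1) ∈ I. -/
lemma nat_cancel_mem {A : Type*} [CommRing A] [Algebra ℚ A] (I : Ideal A)
    (m : ℕ) (hm : m ≠ 0) (y : A) (h : (m : A) * y ∈ I) : y ∈ I := by
  have hy : y = algebraMap ℚ A ((m : ℚ)⁻¹) * ((m : A) * y) := by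
    rw [← mul_assoc]
    have h1 : algebraMap ℚ A ((m : ℚ)⁻¹) * (m : A) = 1 := by
      rw [show ((m : A) : A) = algebraMap ℚ A (m : ℚ) by simp, ← map_mul]
      rw [inv_mul_cancel₀ (by exact_mod_cast hm)]
      simp
    rw [h1, one_mul]
  rw [hy]
  exact I.mul_mem_left _ h

/-- Let `A` be a commutative ring containing the rationals, `d : A → A` a
derivation, and `I` an ideal of `A` stable under `d`. If `a ∈ A` satisfies `aⁿ ∈ I` for some
`n ≥ 1`, then `(d a)^(2n-1) ∈ I`. -/
theorem deriv_pow_mem_of_pow_mem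
    (A : Type*) [CommRing A] [Algebra ℚ A] (d : Derivation ℚ A A)
    (I : Ideal A) (hI : ∀ x ∈ I, d x ∈ I)
    (a : A) (n : ℕ) (hn : 1 ≤ n) (ha : a ^ n ∈ I) :
    (d a) ^ (2 * n - 1) ∈ I := by
  set x := d a with hx
  have key : ∀ j, j ≤ n - 1 → a ^ (n - 1 - j) * x ^ (2 * j + 1) ∈ I := by
    intro j
    induction j with
    | zero =>
      intro _
      have h1 : d (a ^ n) ∈ I := hI _ ha
      rw [Derivation.leibniz_pow] at h1
      have h2 : (n : A) * (a ^ (n - 1 - 0) * x ^ (2 * 0 + 1)) ∈ I := by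
        simpa [smul_smul, nsmul_eq_mul, mul_assoc, pow_one] using h1
      exact nat_cancel_mem I n (by omega) _ h2
    | succ j ih =>
      intro hj
      have hj' : j ≤ n - 1 := by omega
      have H := ih hj'
      set m := n - 1 - j with hm
      have hm1 : 1 ≤ m := by omega
      obtain ⟨m', hm'⟩ : ∃ m', m = m' + 1 := ⟨m - 1, by omega⟩
      have hd : d (a ^ m * x ^ (2 * j + 1)) ∈ I := hI _ H
      have heq : (m : A) * (a ^ m' * x ^ (2 * j + 3)) =
          d (a ^ m * x ^ (2 * j + 1)) * x
            - ((2 * j + 1 : ℕ) : A) * d x * (a ^ m * x ^ (2 * j + 1)) := by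
        rw [Derivation.leibniz, Derivation.leibniz_pow, Derivation.leibniz_pow]
        rw [hm']
        simp only [nsmul_eq_mul, smul_eq_mul, Nat.add_sub_cancel, ← hx]
        push_cast
        ring
      have hmem : (m : A) * (a ^ m' * x ^ (2 * j + 3)) ∈ I := by
        rw [heq]
        exact I.sub_mem (I.mul_mem_right _ hd) (I.mul_mem_left _ H)
      have := nat_cancel_mem I m (by omega) _ hmem
      have hexp : n - 1 - (j + 1) = m' := by omega
      rw [hexp, show 2 * (j + 1) + 1 = 2 * j + 3 by omega]
      exact this
  have := key (n - 1) le_rfl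
  simpa [Nat.sub_self, show 2 * (n - 1) + 1 = 2 * n - 1 by omega] using this
end

section
/- Let A be a commutative ring containing the rationals, d : A → A a derivation, and I a differential ideal of A (d(I) ⊆ I). Then the radical √I is again a differential ideal, i.e. d(√I) ⊆ √I. -/
/-- Let `A` be a commutative ring containing the rationals, `d` a derivation and
`I` a differential ideal (`d(I) ⊆ I`). Then the radical `√I` is again a differential ideal,
i.e. `d(√I) ⊆ √I`. -/
theorem radical_isDifferentialIdeal
    (A : Type*) [CommRing A] [Algebra ℚ A] (d : Derivation ℚ A A)
    (I : Ideal A) (hI : ∀ x ∈ I, d x ∈ I) :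
    ∀ a ∈ I.radical, d a ∈ I.radical := by
  rintro a ⟨n, hn⟩
  -- dividing by a nonzero natural number preserves membership in I
  have inv : ∀ (c : ℕ) (x : A), c ≠ 0 → (c : A) * x ∈ I → x ∈ I := by
    intro c x hc h
    have hq : ((c : ℚ) ≠ 0) := Nat.cast_ne_zero.mpr hc
    have h1 : (c : A) * x = (c : ℚ) • x := by
      rw [Algebra.smul_def, map_natCast]
    have h2 : ((c : ℚ)⁻¹) • ((c : A) * x) ∈ I := by
      rw [Algebra.smul_def]; exact I.mul_mem_left _ h
    rwa [h1, smul_smul, inv_mul_cancel₀ hq, one_smul] at h2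
  have key : ∀ (m j : ℕ), a ^ m * d a ^ j ∈ I → d a ^ (j + 2 * m) ∈ I := by
    intro m
    induction m with
    | zero => intro j h; simpa using h
    | succ m ih =>
      intro j h
      have hd : d a * d (a ^ (m + 1) * d a ^ j) ∈ I := I.mul_mem_left _ (hI _ h)
      have h2 : (j : A) * d (d a) * (a ^ (m + 1) * d a ^ j) ∈ I := I.mul_mem_left _ h
      have h3 : ((m + 1 : ℕ) : A) * (a ^ m * d a ^ (j + 2)) ∈ I := by
        have hsub := I.sub_mem hd h2
        have heq : d a * d (a ^ (m + 1) * d a ^ j) - (j : A) * d (d a) * (a ^ (m + 1) * d a ^ j)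
            = ((m + 1 : ℕ) : A) * (a ^ m * d a ^ (j + 2)) := by
          rw [Derivation.leibniz, Derivation.leibniz_pow, Derivation.leibniz_pow]
          simp only [smul_eq_mul, nsmul_eq_mul]
          cases j with
          | zero => simp; ring
          | succ j =>
            simp only [Nat.add_sub_cancel, Nat.cast_succ]
            ring
        rwa [heq] at hsub
      have h4 : a ^ m * d a ^ (j + 2) ∈ I := inv _ _ (Nat.succ_ne_zero m) h3
      have h5 := ih (j + 2) h4
      have : j + 2 + 2 * m = j + 2 * (m + 1) := by ring
      rwa [this] at h5
  exact ⟨2 * n, by simpa using key n 0 (by simpa using hn)⟩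
end

section
/- Let A be a commutative ring containing ℚ with a derivation d. If the partially ordered set of radical differential ideals of A satisfies the ascending chain condition, then for every subset S ⊆ A there exists a finite subset S₀ ⊆ S such that the smallest radical differential ideal containing S₀ equals the smallest radical differential ideal containing S. -/
/-- If the poset of radical differential ideals of `A` satisfies the ascending
chain condition, then for every subset `S ⊆ A` there is a finite subset `S₀ ⊆ S` such that the
smallest radical differential ideal containing `S₀` equals the smallest radical differential
ideal containing `S`. -/
theorem exists_finite_basis_of_acc_radical_differential_ideals
    (A : Type*) [CommRing A] [Algebra ℚ A] (d : Derivation ℚ A A)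
    (hacc : ∀ f : ℕ →o Ideal A,
      (∀ n, (f n).IsRadical ∧ ∀ x ∈ f n, d x ∈ f n) → ∃ n, ∀ m, n ≤ m → f m = f n)
    (S : Set A) :
    ∃ S₀ : Finset A, (↑S₀ : Set A) ⊆ S ∧
      sInf {J : Ideal A | (J.IsRadical ∧ ∀ x ∈ J, d x ∈ J) ∧ (↑S₀ : Set A) ⊆ (J : Set A)} =
        sInf {J : Ideal A | (J.IsRadical ∧ ∀ x ∈ J, d x ∈ J) ∧ S ⊆ (J : Set A)} := by
  classical
  set P : Ideal A → Prop := fun J => J.IsRadical ∧ ∀ x ∈ J, d x ∈ J with hP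
  set R : Set A → Ideal A := fun T => sInf {J : Ideal A | P J ∧ T ⊆ (J : Set A)} with hR
  -- T ⊆ R T
  have hsub : ∀ T : Set A, T ⊆ (R T : Set A) := by
    intro T x hx
    rw [hR]
    exact Ideal.mem_sInf.2 fun {J} hJ => hJ.2 hx
  -- R T ≤ J for J radical differential containing T
  have hle : ∀ (T : Set A) (J : Ideal A), P J → T ⊆ (J : Set A) → R T ≤ J := by
    intro T J hJ hTJ
    exact sInf_le ⟨hJ, hTJ⟩
  -- P (R T)
  have hPR : ∀ T : Set A, P (R T) := by
    intro T
    constructor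
    · intro x hx
      obtain ⟨n, hn⟩ := Ideal.mem_radical_iff.1 hx
      rw [hR] at hn ⊢
      rw [Ideal.mem_sInf] at hn ⊢
      intro J hJ
      exact hJ.1.1 ⟨n, hn hJ⟩
    · intro x hx
      rw [hR, Ideal.mem_sInf] at hx ⊢
      intro J hJ
      exact hJ.1.2 x (hx hJ)
  -- R is monotone
  have hmono : ∀ T T' : Set A, T ⊆ T' → R T ≤ R T' :=
    fun T T' h => hle T (R T') (hPR T') (h.trans (hsub T'))
  by_contra hcon
  push_neg at hcon
  have key : ∀ S₀ : Finset A, (↑S₀ : Set A) ⊆ S → ∃ s ∈ S, s ∉ R ↑S₀ := by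
    intro S₀ hS₀
    by_contra h
    push_neg at h
    refine hcon S₀ hS₀ (le_antisymm (hmono _ _ hS₀) (hle S (R ↑S₀) (hPR _) h))
  choose! pick hpickS hpickN using key
  obtain ⟨c, hc0, hcs⟩ : ∃ c : ℕ → Finset A, c 0 = ∅ ∧
      ∀ n, c (n + 1) = insert (pick (c n)) (c n) :=
    ⟨fun n => Nat.rec ∅ (fun _ T => insert (pick T) T) n, rfl, fun _ => rfl⟩
  have hcS : ∀ n, (↑(c n) : Set A) ⊆ S := by
    intro n
    induction n with
    | zero => simp [hc0]
    | succ n ih =>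
      rw [hcs n, Finset.coe_insert]
      exact Set.insert_subset (hpickS (c n) ih) ih
  have hcmono : ∀ n, (↑(c n) : Set A) ⊆ ↑(c (n + 1)) := by
    intro n
    rw [hcs n, Finset.coe_insert]
    exact Set.subset_insert _ _
  let f : ℕ →o Ideal A :=
    ⟨fun n => R ↑(c n), monotone_nat_of_le_succ fun n => hmono _ _ (hcmono n)⟩
  obtain ⟨n, hn⟩ := hacc f fun n => hPR _
  have h1 : pick (c n) ∈ f (n + 1) := by
    apply hsub (↑(c (n + 1)))
    rw [hcs n, Finset.coe_insert]
    exact Set.mem_insert _ _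
  rw [hn (n + 1) (Nat.le_succ n)] at h1
  exact hpickN (c n) (hcS n) h1
end

section
/- In a commutative differential ring (A, d) over ℚ in which every radical differential ideal is the radical differential ideal generated by a finite set (Ritt–Noetherianity), every radical differential ideal I with I ≠ A is a finite intersection of prime differential ideals. -/
/-!
If `a * b ∈ J` for a radical differential ideal `J`, then the radical differential ideals
generated by `J ∪ {a}` and by `J ∪ {b}` meet in `J`. The reason is that the colon ideal `J : a`
is again radical and differential, because `(a dz)² = a dz · d(az) - az · dz da`. Hence a
radical differential ideal that is neither prime nor the whole ring is the intersection of two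
strictly larger ones, and Ritt–Noetherianity, which makes `>` well-founded on radical
differential ideals, guarantees that this splitting stops after finitely many steps.
-/

namespace Derivation

variable {R A : Type*} [CommSemiring R] [CommRing A] [Algebra R A] (d : Derivation R A A)

def IsRadicalDifferentialIdeal (I : Ideal A) : Prop :=
  I.IsRadical ∧ ∀ x ∈ I, d x ∈ I

def radicalDifferentialClosure (S : Set A) : Ideal A :=
  sInf {J : Ideal A | d.IsRadicalDifferentialIdeal J ∧ S ⊆ J}

def IsRittNoetherian : Prop :=
  ∀ I : Ideal A, d.IsRadicalDifferentialIdeal I →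
    ∃ S : Finset A, I = d.radicalDifferentialClosure S

variable {d}

theorem isRadicalDifferentialIdeal_sInf {s : Set (Ideal A)}
    (hs : ∀ J ∈ s, d.IsRadicalDifferentialIdeal J) : d.IsRadicalDifferentialIdeal (sInf s) :=
  ⟨fun _ hx => Submodule.mem_sInf.2 fun J hJ => (hs J hJ).1 (Ideal.radical_mono (sInf_le hJ) hx),
    fun x hx => Submodule.mem_sInf.2 fun J hJ => (hs J hJ).2 x (Submodule.mem_sInf.1 hx J hJ)⟩

theorem isRadicalDifferentialIdeal_iSup {ι : Type*} [Nonempty ι] {f : ι → Ideal A}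
    (hf : Directed (· ≤ ·) f) (hfd : ∀ i, d.IsRadicalDifferentialIdeal (f i)) :
    d.IsRadicalDifferentialIdeal (⨆ i, f i) := by
  have mem_iSup (x : A) : x ∈ ⨆ i, f i ↔ ∃ i, x ∈ f i := Submodule.mem_iSup_of_directed f hf
  refine ⟨fun x hx => ?_, fun x hx => ?_⟩
  · obtain ⟨n, hn⟩ := Ideal.mem_radical_iff.1 hx
    obtain ⟨i, hi⟩ := (mem_iSup _).1 hn
    exact (mem_iSup x).2 ⟨i, (hfd i).1 (Ideal.mem_radical_iff.2 ⟨n, hi⟩)⟩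
  · obtain ⟨i, hi⟩ := (mem_iSup x).1 hx
    exact (mem_iSup _).2 ⟨i, (hfd i).2 x hi⟩

theorem subset_radicalDifferentialClosure (S : Set A) : S ⊆ d.radicalDifferentialClosure S :=
  fun _ hx => Submodule.mem_sInf.2 fun _ hJ => hJ.2 hx

theorem radicalDifferentialClosure_le {S : Set A} {J : Ideal A}
    (hJ : d.IsRadicalDifferentialIdeal J) (hS : S ⊆ J) : d.radicalDifferentialClosure S ≤ J :=
  sInf_le ⟨hJ, hS⟩

theorem isRadicalDifferentialIdeal_radicalDifferentialClosure (S : Set A) :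
    d.IsRadicalDifferentialIdeal (d.radicalDifferentialClosure S) :=
  isRadicalDifferentialIdeal_sInf fun _ hJ => hJ.1

theorem lt_radicalDifferentialClosure_insert {J : Ideal A} {a : A} (ha : a ∉ J) :
    J < d.radicalDifferentialClosure (insert a J) :=
  SetLike.lt_iff_le_and_exists.2
    ⟨fun _ hx => subset_radicalDifferentialClosure _ (Set.mem_insert_of_mem a hx),
      a, subset_radicalDifferentialClosure _ (Set.mem_insert a _), ha⟩

theorem IsRadicalDifferentialIdeal.colon {I : Ideal A} (hI : d.IsRadicalDifferentialIdeal I)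
    (a : A) : d.IsRadicalDifferentialIdeal (I.colon {a}) := by
  have mem (z : A) : z ∈ I.colon {a} ↔ a * z ∈ I := by
    rw [Submodule.mem_colon_singleton, smul_eq_mul, mul_comm]
  refine ⟨fun z hz => ?_, fun z hz => ?_⟩
  · obtain ⟨n, hn⟩ := Ideal.mem_radical_iff.1 hz
    rw [mem] at hn ⊢
    refine hI.1 (Ideal.mem_radical_iff.2 ⟨n + 1, ?_⟩)
    rw [show (a * z) ^ (n + 1) = a ^ n * z * (a * z ^ n) by ring]
    exact I.mul_mem_left _ hn
  · rw [mem] at hz ⊢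
    refine hI.1 (Ideal.mem_radical_iff.2 ⟨2, ?_⟩)
    have hsq : (a * d z) ^ 2 = a * d z * d (a * z) - a * z * (d z * d a) := by
      rw [Derivation.leibniz, smul_eq_mul, smul_eq_mul]
      ring
    rw [hsq]
    exact I.sub_mem (I.mul_mem_left _ (hI.2 _ hz)) (I.mul_mem_right _ hz)

theorem inf_radicalDifferentialClosure_insert_le {I : Ideal A}
    (hI : d.IsRadicalDifferentialIdeal I) {a b : A} (hab : a * b ∈ I) :
    d.radicalDifferentialClosure (insert a I) ⊓ d.radicalDifferentialClosure (insert b I) ≤ I := by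
  have le_colon {c : A} {T : Set A} (hT : ∀ t ∈ T, c * t ∈ I) :
      d.radicalDifferentialClosure T ≤ I.colon {c} :=
    radicalDifferentialClosure_le (hI.colon c) fun t ht => by
      rw [SetLike.mem_coe, Submodule.mem_colon_singleton, smul_eq_mul, mul_comm]
      exact hT t ht
  have hb : d.radicalDifferentialClosure (insert b I) ≤ I.colon {a} :=
    le_colon (Set.forall_mem_insert.2 ⟨hab, fun t ht => I.mul_mem_left a ht⟩)
  rintro x ⟨hxa, hxb⟩
  have hax : a * x ∈ I := by simpa [mul_comm] using hb hxb
  have ha : d.radicalDifferentialClosure (insert a I) ≤ I.colon {x} :=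
    le_colon (Set.forall_mem_insert.2 ⟨by rwa [mul_comm], fun t ht => I.mul_mem_left x ht⟩)
  have hxx : x * x ∈ I := by simpa using ha hxa
  exact hI.1 (Ideal.mem_radical_iff.2 ⟨2, by rwa [pow_two]⟩)

theorem IsRadicalDifferentialIdeal.exists_lt_lt_eq_inf {J : Ideal A}
    (hJ : d.IsRadicalDifferentialIdeal J) (htop : J ≠ ⊤) (hprime : ¬J.IsPrime) :
    ∃ J₁ J₂ : Ideal A, d.IsRadicalDifferentialIdeal J₁ ∧ d.IsRadicalDifferentialIdeal J₂ ∧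
      J < J₁ ∧ J < J₂ ∧ J = J₁ ⊓ J₂ := by
  obtain ⟨a, b, hab, ha, hb⟩ : ∃ a b, a * b ∈ J ∧ a ∉ J ∧ b ∉ J := by
    simpa [Ideal.isPrime_iff, htop] using hprime
  have hlt₁ := lt_radicalDifferentialClosure_insert (d := d) ha
  have hlt₂ := lt_radicalDifferentialClosure_insert (d := d) hb
  exact ⟨_, _, isRadicalDifferentialIdeal_radicalDifferentialClosure _,
    isRadicalDifferentialIdeal_radicalDifferentialClosure _, hlt₁, hlt₂,
    le_antisymm (le_inf hlt₁.le hlt₂.le) (inf_radicalDifferentialClosure_insert_le hJ hab)⟩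

theorem IsRittNoetherian.wellFoundedGT (h : d.IsRittNoetherian) :
    WellFoundedGT {J : Ideal A // d.IsRadicalDifferentialIdeal J} := by
  refine wellFoundedGT_iff_monotone_chain_condition.2 fun f => ?_
  let g : ℕ → Ideal A := fun n => f n
  have hg : Monotone g := fun _ _ hmn => f.mono hmn
  obtain ⟨S, hS⟩ := h _ (isRadicalDifferentialIdeal_iSup hg.directed_le fun n => (f n).2)
  have hgen : ∀ s ∈ S, ∃ n, s ∈ g n := fun s hs =>
    (Submodule.mem_iSup_of_directed g hg.directed_le).1
      (hS ▸ subset_radicalDifferentialClosure _ hs)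
  choose! k hk using hgen
  have hbound : ⨆ n, g n ≤ g (S.sup k) := hS ▸
    radicalDifferentialClosure_le (f _).2 fun s hs => hg (Finset.le_sup hs) (hk s hs)
  exact ⟨S.sup k, fun m hm => le_antisymm (f.mono hm) ((le_iSup g m).trans hbound)⟩

theorem exists_finset_isPrime_inf_eq
    [WellFoundedGT {J : Ideal A // d.IsRadicalDifferentialIdeal J}] {I : Ideal A}
    (hI : d.IsRadicalDifferentialIdeal I) :
    ∃ s : Finset (Ideal A), (∀ P ∈ s, P.IsPrime ∧ ∀ x ∈ P, d x ∈ P) ∧ I = s.inf id := by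
  classical
  suffices ∀ J : {J : Ideal A // d.IsRadicalDifferentialIdeal J},
      ∃ s : Finset (Ideal A), (∀ P ∈ s, P.IsPrime ∧ ∀ x ∈ P, d x ∈ P) ∧ J.1 = s.inf id from
    this ⟨I, hI⟩
  intro J
  induction J using WellFoundedGT.induction with
  | ind J ih =>
  obtain ⟨J, hJ⟩ := J
  by_cases htop : J = ⊤
  · exact ⟨∅, by simp, by simp [htop]⟩
  by_cases hprime : J.IsPrime
  · exact ⟨{J}, by simpa using ⟨hprime, hJ.2⟩, by simp⟩
  obtain ⟨J₁, J₂, h₁, h₂, hlt₁, hlt₂, rfl⟩ := hJ.exists_lt_lt_eq_inf htop hprime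
  obtain ⟨s₁, hs₁, rfl⟩ := ih ⟨J₁, h₁⟩ hlt₁
  obtain ⟨s₂, hs₂, rfl⟩ := ih ⟨J₂, h₂⟩ hlt₂
  exact ⟨s₁ ∪ s₂, fun P hP => (Finset.mem_union.1 hP).elim (hs₁ P) (hs₂ P), Finset.inf_union.symm⟩

end Derivation

theorem radical_differential_ideal_eq_finite_inter_of_primes_general
    (A : Type*) [CommRing A] [Algebra ℚ A] (d : Derivation ℚ A A)
    (hritt : ∀ I : Ideal A, I.IsRadical → (∀ x ∈ I, d x ∈ I) →
      ∃ S : Finset A,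
        I = sInf {J : Ideal A | (J.IsRadical ∧ ∀ x ∈ J, d x ∈ J) ∧ (↑S : Set A) ⊆ (J : Set A)})
    (I : Ideal A) (hrad : I.IsRadical) (hdiff : ∀ x ∈ I, d x ∈ I) :
    ∃ s : Finset (Ideal A),
      (∀ P ∈ s, P.IsPrime ∧ ∀ x ∈ P, d x ∈ P) ∧ I = s.inf id := by
  have : WellFoundedGT {J : Ideal A // d.IsRadicalDifferentialIdeal J} :=
    Derivation.IsRittNoetherian.wellFoundedGT fun J hJ => hritt J hJ.1 hJ.2
  exact Derivation.exists_finset_isPrime_inf_eq ⟨hrad, hdiff⟩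

/-- In a commutative differential ring `(A, d)` over `ℚ` in which every radical
differential ideal is the smallest radical differential ideal containing a finite set
(Ritt–Noetherianity), every radical differential ideal `I ≠ A` is a finite intersection of
prime differential ideals. -/
theorem radical_differential_ideal_eq_finite_inter_of_primes
    (A : Type*) [CommRing A] [Algebra ℚ A] (d : Derivation ℚ A A)
    (hritt : ∀ I : Ideal A, I.IsRadical → (∀ x ∈ I, d x ∈ I) →
      ∃ S : Finset A,
        I = sInf {J : Ideal A | (J.IsRadical ∧ ∀ x ∈ J, d x ∈ J) ∧ (↑S : Set A) ⊆ (J : Set A)})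
    (I : Ideal A) (hrad : I.IsRadical) (hdiff : ∀ x ∈ I, d x ∈ I) (hne : I ≠ ⊤) :
    ∃ s : Finset (Ideal A),
      (∀ P ∈ s, P.IsPrime ∧ ∀ x ∈ P, d x ∈ P) ∧ I = s.inf id :=
  radical_differential_ideal_eq_finite_inter_of_primes_general A d hritt I hrad hdiff
end
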